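/- Let s: S³∖{north pole} → ℝ³ be stereographic projection s(x) = (x₁,x₂,x₃)/(1−x₀), and let M(x,y) = (q,p) with q = −(1−x₀)(y₁,y₂,y₃) − y₀(x₁,x₂,x₃) and p = (x₁,x₂,x₃)/(1−x₀), defined for (x,y) with |x|=1, ⟨x,y⟩=0, x₀≠1. Then |q| = |y|(1−x₀) and |p|² + 1 = 2/(1−x₀). Consequently K₊(q,p) = |q|(|p|²+1) − 2 = 2|y| − 2, so K₊(q,p)=0 if and only if |y|=1. -/

import Mathlib

open scoped RealInnerProductSpace

noncomputable section

abbrev E3 := EuclideanSpace ℝ (Fin 3)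
abbrev E4 := EuclideanSpace ℝ (Fin 4)

/-- The spatial part x̄ = (x₁,x₂,x₃) of x = (x₀,x₁,x₂,x₃). -/
def tl (x : E4) : E3 := WithLp.toLp 2 (fun i => x i.succ)

/-- q-component of the Moser map: q = −(1−x₀)ȳ − y₀x̄. -/
def moserQ (x y : E4) : E3 := -((1 - x 0) • tl y) - (y 0) • tl x

/-- p-component of the Moser map: p = x̄/(1−x₀) (stereographic projection). -/
def moserP (x : E4) : E3 := (1 - x 0)⁻¹ • tl x

theorem moser_basic_identities (x y : E4)
    (hx : ‖x‖ = 1) (hxy : ⟪x, y⟫ = 0) (hx0 : x 0 ≠ 1) :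
    ‖moserQ x y‖ = ‖y‖ * (1 - x 0) ∧
    ‖moserP x‖ ^ 2 + 1 = 2 / (1 - x 0) ∧
    ‖moserQ x y‖ * (‖moserP x‖ ^ 2 + 1) - 2 = 2 * ‖y‖ - 2 ∧
    (‖moserQ x y‖ * (‖moserP x‖ ^ 2 + 1) - 2 = 0 ↔ ‖y‖ = 1) := by
  have key3 : ∀ v : E3, ‖v‖ ^ 2 = v 0 ^ 2 + v 1 ^ 2 + v 2 ^ 2 := by
    intro v
    rw [EuclideanSpace.norm_sq_eq, Fin.sum_univ_three]
    simp only [Real.norm_eq_abs, sq_abs]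
  have key4 : ∀ v : E4, ‖v‖ ^ 2 = v 0 ^ 2 + v 1 ^ 2 + v 2 ^ 2 + v 3 ^ 2 := by
    intro v
    rw [EuclideanSpace.norm_sq_eq, Fin.sum_univ_four]
    simp only [Real.norm_eq_abs, sq_abs]
  have hx2 : x 0 ^ 2 + x 1 ^ 2 + x 2 ^ 2 + x 3 ^ 2 = 1 := by
    have := key4 x; rw [hx] at this; linarith
  have hxy2 : x 0 * y 0 + x 1 * y 1 + x 2 * y 2 + x 3 * y 3 = 0 := by
    have : ⟪x, y⟫ = x 0 * y 0 + x 1 * y 1 + x 2 * y 2 + x 3 * y 3 := by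
      simp [PiLp.inner_apply, Fin.sum_univ_four]
      ring
    rw [hxy] at this; linarith
  have hx0' : ¬ (1 : ℝ) = x 0 := fun h => hx0 h.symm
  have hx0le : x 0 < 1 := by
    rcases lt_or_eq_of_le (le_of_not_gt (fun h : 1 < x 0 => by nlinarith)) with h | h
    · exact h
    · exact absurd h.symm hx0'
  have hpos : 0 < 1 - x 0 := by linarith
  have hne : (1 : ℝ) - x 0 ≠ 0 := ne_of_gt hpos
  have hy2 : ‖y‖ ^ 2 = y 0 ^ 2 + y 1 ^ 2 + y 2 ^ 2 + y 3 ^ 2 := key4 y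
  have hQc : ∀ i : Fin 3, moserQ x y i = -((1 - x 0) * y i.succ) - y 0 * x i.succ := by
    intro i; simp [moserQ, tl]
  have hPc : ∀ i : Fin 3, moserP x i = (1 - x 0)⁻¹ * x i.succ := by
    intro i; simp [moserP, tl]
  have e1 : ((0:Fin 3).succ : Fin 4) = 1 := rfl
  have e2 : ((1:Fin 3).succ : Fin 4) = 2 := rfl
  have e3 : ((2:Fin 3).succ : Fin 4) = 3 := rfl
  have hQ2 : ‖moserQ x y‖ ^ 2 = (‖y‖ * (1 - x 0)) ^ 2 := by
    rw [key3, hQc 0, hQc 1, hQc 2]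
    show _ = (‖y‖ * (1 - x 0)) ^ 2
    rw [mul_pow, hy2]
    rw [e1, e2, e3]
    linear_combination (2*(1 - x 0)*y 0) * hxy2 + (y 0)^2 * hx2
  have hQ : ‖moserQ x y‖ = ‖y‖ * (1 - x 0) := by
    have h1 : 0 ≤ ‖y‖ * (1 - x 0) := mul_nonneg (norm_nonneg _) (le_of_lt hpos)
    nlinarith [norm_nonneg (moserQ x y)]
  have hP : ‖moserP x‖ ^ 2 + 1 = 2 / (1 - x 0) := by
    rw [key3, hPc 0, hPc 1, hPc 2]
    rw [e1, e2, e3]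
    field_simp
    linear_combination hx2
  refine ⟨hQ, hP, ?_, ?_⟩
  · rw [hQ, hP]; field_simp
  · rw [hQ, hP]
    have : ‖y‖ * (1 - x 0) * (2 / (1 - x 0)) = 2 * ‖y‖ := by field_simp
    rw [this]
    constructor <;> intro h <;> linarith
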